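/- (Single-step propagation of weight moments.) Let s ∈ ℍ, λ ∈ ℂ with Im λ ≥ 0, p ∈ (0,1), ν a Borel probability measure on ℝ with ∫ |q|^{2(1+p)} dν(q) < ∞, and ρ a Borel probability measure on ℍ with ∫_ℍ w_s(z)^{1+p} dρ(z) < ∞. Then ∫_{ℍ×ℝ} w_s( −1/(z + λ − q + 1) )^{1+p} dρ(z) dν(q) < ∞. (Note that for z ∈ ℍ, q ∈ ℝ and Im λ ≥ 0 one has −1/(z + λ − q + 1) ∈ ℍ.) -/

import Mathlib

/-!
Write `u = z + λ - q + 1`. Then `w_s(-1/u) = |1 + s u|² / (Im u · Im s)` and `Im u ≥ Im z`.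
The numerator grows at most quadratically in `|z - s|` and `|q|`, while
`Im s / Im z ≤ w_s(z) + 2`, so `w_s(-1/u) ≤ K (w_s(z) + 1)(q² + 1)`. Raised to the power
`1 + p`, this bound is a product of a `ρ`-integrable function of `z` and a `ν`-integrable
function of `q`.
-/

open MeasureTheory
open scoped ENNReal

noncomputable section

def wt (s z : ℂ) : ℝ := ‖z - s‖ ^ 2 / (z.im * s.im)

section Weight

variable {s z : ℂ}

lemma wt_nonneg (hs : 0 ≤ s.im) (hz : 0 ≤ z.im) : 0 ≤ wt s z := by
  unfold wt; positivity

lemma wt_neg_one_div (s u : ℂ) : wt s (-1 / u) = ‖1 + s * u‖ ^ 2 / (u.im * s.im) := by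
  rcases eq_or_ne u 0 with rfl | hu
  · simp [wt]
  have hsub : -1 / u - s = -((1 + s * u) / u) := by field_simp; ring
  have him : (-1 / u).im = u.im / ‖u‖ ^ 2 := by
    rw [neg_div, Complex.neg_im, one_div, Complex.inv_im, Complex.sq_norm]; ring
  have hu' : ‖u‖ ≠ 0 := norm_ne_zero_iff.mpr hu
  rw [wt, hsub, norm_neg, norm_div, him, div_pow]
  field_simp

lemma im_div_im_le_wt_add_two (hs : 0 < s.im) (hz : 0 < z.im) :
    s.im / z.im ≤ wt s z + 2 := by
  have him : (z.im - s.im) ^ 2 ≤ ‖z - s‖ ^ 2 := by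
    rw [← Complex.sub_im, ← sq_abs]
    exact pow_le_pow_left₀ (abs_nonneg _) (Complex.abs_im_le_norm _) 2
  calc s.im / z.im = s.im ^ 2 / (z.im * s.im) := by field_simp
    _ ≤ (‖z - s‖ ^ 2 + 2 * (z.im * s.im)) / (z.im * s.im) := by gcongr; nlinarith
    _ = wt s z + 2 := by rw [wt]; field_simp

lemma exists_wt_neg_one_div_le (hs : 0 < s.im) {c : ℂ} (hc : 0 ≤ c.im) :
    ∃ K : ℝ, ∀ z : ℂ, 0 < z.im → ∀ q : ℝ,
      wt s (-1 / (z + c - q)) ≤ K * ((wt s z + 1) * (q ^ 2 + 1)) := by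
  set b := ‖s‖
  set d := ‖1 + s * (s + c)‖
  refine ⟨6 * (d ^ 2 + b ^ 2) / s.im ^ 2 + 3 * b ^ 2, fun z hz q ↦ ?_⟩
  have hw : 0 ≤ wt s z := wt_nonneg hs.le hz.le
  have hs_le : s.im ≤ 2 * (wt s z + 1) * z.im := by
    have := im_div_im_le_wt_add_two hs hz
    rw [div_le_iff₀ hz] at this; nlinarith [mul_nonneg hw hz.le]
  have hzs : ‖z - s‖ ^ 2 = wt s z * (z.im * s.im) := by rw [wt]; field_simp
  have hnum : ‖1 + s * (z + c - q)‖ ≤ d + b * ‖z - s‖ + b * |q| := by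
    rw [show 1 + s * (z + c - q) = (1 + s * (s + c)) + s * (z - s) - s * q by ring]
    refine (norm_sub_le _ _).trans ?_
    rw [norm_mul, Complex.norm_real, Real.norm_eq_abs]
    gcongr
    exact (norm_add_le _ _).trans_eq (by rw [norm_mul])
  have hnum2 : ‖1 + s * (z + c - q)‖ ^ 2 ≤
      3 * (d ^ 2 + b ^ 2 * q ^ 2) + 3 * b ^ 2 * ‖z - s‖ ^ 2 := by
    have h := pow_le_pow_left₀ (norm_nonneg _) hnum 2
    nlinarith [sq_nonneg (d - b * ‖z - s‖), sq_nonneg (d - b * |q|),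
      sq_nonneg (b * ‖z - s‖ - b * |q|), sq_abs q]
  have hconst : 3 * (d ^ 2 + b ^ 2 * q ^ 2) ≤
      6 * (d ^ 2 + b ^ 2) / s.im ^ 2 * ((wt s z + 1) * (q ^ 2 + 1)) * (z.im * s.im) := by
    rw [show 6 * (d ^ 2 + b ^ 2) / s.im ^ 2 * ((wt s z + 1) * (q ^ 2 + 1)) * (z.im * s.im)
        = 3 * ((d ^ 2 + b ^ 2) * (q ^ 2 + 1)) * (2 * (wt s z + 1) * z.im / s.im) by
      field_simp; ring]
    calc 3 * (d ^ 2 + b ^ 2 * q ^ 2) ≤ 3 * ((d ^ 2 + b ^ 2) * (q ^ 2 + 1)) := by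
          nlinarith [sq_nonneg d, mul_nonneg (sq_nonneg b) (sq_nonneg q)]
      _ ≤ _ := le_mul_of_one_le_right (by positivity) (by rwa [one_le_div hs])
  have hdist : 3 * b ^ 2 * ‖z - s‖ ^ 2 ≤
      3 * b ^ 2 * ((wt s z + 1) * (q ^ 2 + 1)) * (z.im * s.im) := by
    rw [hzs, ← mul_assoc]
    gcongr
    nlinarith [mul_nonneg hw (sq_nonneg q), sq_nonneg q]
  have hz_le : z.im ≤ (z + c - q).im := by
    simp only [Complex.add_im, Complex.sub_im, Complex.ofReal_im]
    linarith
  rw [wt_neg_one_div, div_le_iff₀ (by nlinarith)]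
  calc ‖1 + s * (z + c - q)‖ ^ 2
      ≤ (6 * (d ^ 2 + b ^ 2) / s.im ^ 2 + 3 * b ^ 2) * ((wt s z + 1) * (q ^ 2 + 1)) *
          (z.im * s.im) := by linarith
    _ ≤ _ := by gcongr

lemma exists_ofReal_wt_neg_one_div_rpow_le (hs : 0 < s.im) {c : ℂ} (hc : 0 ≤ c.im) {r : ℝ}
    (hr : 0 ≤ r) :
    ∃ C : ℝ≥0∞, C ≠ ⊤ ∧ ∀ z : ℂ, 0 < z.im → ∀ q : ℝ,
      ENNReal.ofReal (wt s (-1 / (z + c - q)) ^ r) ≤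
        C * (ENNReal.ofReal (wt s z ^ r) + 1) * (ENNReal.ofReal (|q| ^ (2 * r)) + 1) := by
  obtain ⟨K, hK⟩ := exists_wt_neg_one_div_le hs hc
  set L := ENNReal.LpAddConst (ENNReal.ofReal r)⁻¹
  have hL : L ≠ ⊤ := (ENNReal.LpAddConst_lt_top _).ne
  refine ⟨ENNReal.ofReal K ^ r * L * L, by finiteness, fun z hz q ↦ ?_⟩
  have hw : 0 ≤ wt s z := wt_nonneg hs.le hz.le
  have hw' : 0 ≤ wt s (-1 / (z + c - q)) := by
    rw [wt_neg_one_div]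
    have : 0 ≤ (z + c - q).im := by
      simp only [Complex.add_im, Complex.sub_im, Complex.ofReal_im]
      linarith
    positivity
  have hq : ENNReal.ofReal (q ^ 2) ^ r = ENNReal.ofReal (|q| ^ (2 * r)) := by
    rw [ENNReal.ofReal_rpow_of_nonneg (sq_nonneg q) hr, ← sq_abs, Real.rpow_mul (abs_nonneg q),
      Real.rpow_two]
  have hsplit (x : ℝ≥0∞) : (x + 1) ^ r ≤ L * (x ^ r + 1) := by
    simpa using ENNReal.rpow_add_le_mul_rpow_add_rpow' x 1 hr
  calc ENNReal.ofReal (wt s (-1 / (z + c - q)) ^ r)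
      = ENNReal.ofReal (wt s (-1 / (z + c - q))) ^ r := (ENNReal.ofReal_rpow_of_nonneg hw' hr).symm
    _ ≤ ENNReal.ofReal (K * ((wt s z + 1) * (q ^ 2 + 1))) ^ r := by gcongr; exact hK z hz q
    _ = ENNReal.ofReal K ^ r * (ENNReal.ofReal (wt s z) + 1) ^ r *
          (ENNReal.ofReal (q ^ 2) + 1) ^ r := by
      rw [ENNReal.ofReal_mul' (by positivity), ENNReal.ofReal_mul (by positivity),
        ENNReal.ofReal_add hw zero_le_one, ENNReal.ofReal_add (sq_nonneg q) zero_le_one,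
        ENNReal.ofReal_one, ENNReal.mul_rpow_of_nonneg _ _ hr, ENNReal.mul_rpow_of_nonneg _ _ hr,
        mul_assoc]
    _ ≤ ENNReal.ofReal K ^ r * (L * (ENNReal.ofReal (wt s z) ^ r + 1)) *
          (L * (ENNReal.ofReal (q ^ 2) ^ r + 1)) := by gcongr <;> exact hsplit _
    _ = _ := by rw [ENNReal.ofReal_rpow_of_nonneg hw hr, hq]; ring

end Weight

section Integrals

variable {α β : Type*} [MeasurableSpace α] [MeasurableSpace β] {μ : Measure α} {ν : Measure β}

lemma lintegral_add_one_lt_top [IsFiniteMeasure μ] {f : α → ℝ≥0∞} (hf : ∫⁻ x, f x ∂μ < ⊤) :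
    ∫⁻ x, (f x + 1) ∂μ < ⊤ := by
  rw [lintegral_add_right _ measurable_const, lintegral_const]
  exact ENNReal.add_lt_top.mpr ⟨hf, by simp⟩

lemma lintegral_lintegral_lt_top_of_le_mul {F : α → β → ℝ≥0∞} {f : α → ℝ≥0∞} {g : β → ℝ≥0∞}
    (hf : ∫⁻ x, f x ∂μ < ⊤) (hg : ∫⁻ y, g y ∂ν < ⊤) (hg_meas : AEMeasurable g ν)
    (hF : ∀ᵐ x ∂μ, ∀ y, F x y ≤ f x * g y) :
    ∫⁻ x, ∫⁻ y, F x y ∂ν ∂μ < ⊤ :=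
  calc ∫⁻ x, ∫⁻ y, F x y ∂ν ∂μ
      ≤ ∫⁻ x, f x * ∫⁻ y, g y ∂ν ∂μ := by
        refine lintegral_mono_ae (hF.mono fun x hx ↦ ?_)
        rw [← lintegral_const_mul'' _ hg_meas]
        exact lintegral_mono hx
    _ = (∫⁻ x, f x ∂μ) * ∫⁻ y, g y ∂ν := lintegral_mul_const' _ _ hg.ne
    _ < ⊤ := ENNReal.mul_lt_top hf hg

end Integrals

theorem statement6_general (s : ℂ) (hs : 0 < s.im) (lam : ℂ) (hlam : 0 ≤ lam.im)
    (p : ℝ) (hp : 0 < p)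
    (ν : Measure ℝ) [IsProbabilityMeasure ν]
    (hmom : ∫⁻ q : ℝ, ENNReal.ofReal (|q| ^ (2 * (1 + p))) ∂ν < ⊤)
    (ρ : Measure ℂ) [IsProbabilityMeasure ρ] (hρsupp : ρ {z : ℂ | z.im ≤ 0} = 0)
    (hρmom : ∫⁻ z, ENNReal.ofReal (wt s z ^ (1 + p)) ∂ρ < ⊤) :
    ∫⁻ z, ∫⁻ q : ℝ,
        ENNReal.ofReal (wt s (-1 / (z + lam - (q : ℂ) + 1)) ^ (1 + p)) ∂ν ∂ρ < ⊤ := by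
  obtain ⟨C, hC, hbound⟩ := exists_ofReal_wt_neg_one_div_rpow_le hs (c := lam + 1)
    (by simpa using hlam) (r := 1 + p) (by linarith)
  have him : ∀ᵐ z ∂ρ, 0 < z.im := by
    rw [ae_iff]; simpa only [not_lt] using hρsupp
  refine lintegral_lintegral_lt_top_of_le_mul
    (f := fun z ↦ C * (ENNReal.ofReal (wt s z ^ (1 + p)) + 1))
    (g := fun q ↦ ENNReal.ofReal (|q| ^ (2 * (1 + p))) + 1) ?_ (lintegral_add_one_lt_top hmom)
    (by fun_prop) ?_
  · rw [lintegral_const_mul' _ _ hC]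
    exact ENNReal.mul_lt_top hC.lt_top (lintegral_add_one_lt_top hρmom)
  · filter_upwards [him] with z hz q
    simpa only [show z + (lam + 1) - q = z + lam - q + 1 by ring, mul_assoc] using hbound z hz q

/-- **single-step propagation of weight moments.** Let `s ∈ ℍ`,
`Im λ ≥ 0`, `p ∈ (0,1)`, `ν` a Borel probability measure on `ℝ` with finite
`2(1+p)`-moment, and `ρ` a Borel probability measure on `ℍ` with
`∫ w_s(z)^{1+p} dρ(z) < ∞`.  Then
`∫∫ w_s(−1/(z+λ−q+1))^{1+p} dρ(z) dν(q) < ∞`. -/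
theorem statement6 (s : ℂ) (hs : 0 < s.im) (lam : ℂ) (hlam : 0 ≤ lam.im)
    (p : ℝ) (hp : 0 < p) (hp1 : p < 1)
    (ν : Measure ℝ) [IsProbabilityMeasure ν]
    (hmom : ∫⁻ q : ℝ, ENNReal.ofReal (|q| ^ (2 * (1 + p))) ∂ν < ⊤)
    (ρ : Measure ℂ) [IsProbabilityMeasure ρ] (hρsupp : ρ {z : ℂ | z.im ≤ 0} = 0)
    (hρmom : ∫⁻ z, ENNReal.ofReal (wt s z ^ (1 + p)) ∂ρ < ⊤) :
    ∫⁻ z, ∫⁻ q : ℝ,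
        ENNReal.ofReal (wt s (-1 / (z + lam - (q : ℂ) + 1)) ^ (1 + p)) ∂ν ∂ρ < ⊤ :=
  statement6_general s hs lam hlam p hp ν hmom ρ hρsupp hρmom

end
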